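/- Let Z be a real skew-symmetric n×n matrix such that I − ZᵀZ is positive definite, and let C = √(I − ZᵀZ) − I. Then ‖C − ½Z²‖_F ≤ ½‖Z‖_F⁴. -/

import Mathlib

open Matrix

/-- The Frobenius norm of a real square matrix: `‖A‖_F = √(trace (Aᵀ A))`. -/
noncomputable def frobeniusNorm {n : ℕ} (A : Matrix (Fin n) (Fin n) ℝ) : ℝ :=
  Real.sqrt (Aᵀ * A).trace

open scoped ComplexOrder in
/-- The positive semidefinite square root of a positive semidefinite matrix, as defined in
Mathlib (December 2024) under the name `Matrix.PosSemidef.sqrt` (since removed). -/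
noncomputable def Matrix.PosSemidef.sqrt {n : Type*} [Fintype n] [DecidableEq n] {𝕜 : Type*} [RCLike 𝕜]
    {A : Matrix n n 𝕜} (hA : A.PosSemidef) : Matrix n n 𝕜 :=
  hA.1.eigenvectorUnitary.1 * diagonal ((↑) ∘ (Real.sqrt ∘ hA.1.eigenvalues)) *
  (star hA.1.eigenvectorUnitary : Matrix n n 𝕜)

/-! Since `Z` is skew, `Z² = -ZᵀZ = A - 1` for `A = 1 - ZᵀZ`, so `C - ½Z² = g(A)` with
`g(x) = √x - 1 - ½(x - 1) = -½(1 - √x)²`. The eigenvalues `μᵢ` of `A` lie in `(0, 1]`, and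
`|1 - √x| ≤ |1 - x|` for `x ≥ 0`, so `‖g(A)‖_F² = Σ g(μᵢ)² ≤ ¼ Σ (1 - μᵢ)⁴ ≤ ¼ (Σ (1 - μᵢ))⁴`,
while `‖Z‖_F² = tr (1 - A) = Σ (1 - μᵢ)`. -/

namespace Matrix

variable {n 𝕜 : Type*} [Fintype n] [DecidableEq n] [RCLike 𝕜] {A : Matrix n n 𝕜}

open scoped ComplexOrder in
lemma PosSemidef.sqrt_eq_cfc (hA : A.PosSemidef) : hA.sqrt = cfc Real.sqrt A := by
  rw [hA.isHermitian.cfc_eq, IsHermitian.cfc, Unitary.conjStarAlgAut_apply]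
  rfl

lemma IsHermitian.trace_cfc (hA : A.IsHermitian) (f : ℝ → ℝ) :
    (cfc f A).trace = ∑ i, (f (hA.eigenvalues i) : 𝕜) := by
  rw [hA.cfc_eq, IsHermitian.cfc, Unitary.conjStarAlgAut_apply, trace_mul_cycle,
    Unitary.coe_star_mul_self, one_mul, trace_diagonal]
  rfl

open scoped ComplexOrder MatrixOrder in
lemma IsHermitian.eigenvalues_le_one (hA : A.IsHermitian) (h : (1 - A).PosSemidef) (i : n) :
    hA.eigenvalues i ≤ 1 :=
  (CFC.le_one_iff A hA.isSelfAdjoint).mp (le_iff.mpr h) _ (hA.eigenvalues_mem_spectrum_real i)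

end Matrix

lemma frobeniusNorm_sq {n : ℕ} (A : Matrix (Fin n) (Fin n) ℝ) :
    frobeniusNorm A ^ 2 = (Aᵀ * A).trace :=
  Real.sq_sqrt (posSemidef_conjTranspose_mul_self A).trace_nonneg

lemma frobeniusNorm_cfc {n : ℕ} {A : Matrix (Fin n) (Fin n) ℝ} (hA : A.IsHermitian) (f : ℝ → ℝ) :
    frobeniusNorm (cfc f A) = √(∑ i, f (hA.eigenvalues i) ^ 2) := by
  have hsymm : (cfc f A)ᵀ = cfc f A := (cfc_predicate f A).star_eq
  rw [frobeniusNorm, hsymm, ← cfc_mul f f A (A.finite_real_spectrum.continuousOn f)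
    (A.finite_real_spectrum.continuousOn f), hA.trace_cfc]
  simp [sq]

lemma Finset.sum_pow_le_pow_sum {ι R : Type*} [CommSemiring R] [PartialOrder R]
    [IsOrderedRing R] {s : Finset ι} {f : ι → R} (hf : ∀ i ∈ s, 0 ≤ f i) {k : ℕ} (hk : k ≠ 0) :
    ∑ i ∈ s, f i ^ k ≤ (∑ i ∈ s, f i) ^ k := by
  obtain ⟨k, rfl⟩ := Nat.exists_eq_succ_of_ne_zero hk
  calc ∑ i ∈ s, f i ^ (k + 1) = ∑ i ∈ s, f i ^ k * f i := by simp only [pow_succ]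
    _ ≤ ∑ i ∈ s, (∑ j ∈ s, f j) ^ k * f i := Finset.sum_le_sum fun i hi => by
          have := hf i hi
          gcongr
          exact Finset.single_le_sum hf hi
    _ = (∑ i ∈ s, f i) ^ (k + 1) := by rw [← Finset.mul_sum, pow_succ]

lemma sq_sqrt_sub_one_sub_half_le {x : ℝ} (hx : 0 ≤ x) :
    (√x - 1 - 1 / 2 * (x - 1)) ^ 2 ≤ (1 - x) ^ 4 / 4 := by
  obtain ⟨r, hr, rfl⟩ : ∃ r, 0 ≤ r ∧ x = r ^ 2 := ⟨√x, Real.sqrt_nonneg x, (Real.sq_sqrt hx).symm⟩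
  rw [Real.sqrt_sq hr]
  calc (r - 1 - 1 / 2 * (r ^ 2 - 1)) ^ 2 = (1 - r) ^ 4 / 4 := by ring
    _ ≤ (1 - r) ^ 4 * (1 + r) ^ 4 / 4 := by
        gcongr
        exact le_mul_of_one_le_right (by positivity) (one_le_pow₀ (by linarith))
    _ = (1 - r ^ 2) ^ 4 / 4 := by ring

lemma sqrt_sum_sq_sqrt_sub_one_sub_half_le {ι : Type*} (s : Finset ι) {μ : ι → ℝ}
    (h0 : ∀ i, 0 ≤ μ i) (h1 : ∀ i, μ i ≤ 1) :
    √(∑ i ∈ s, (√(μ i) - 1 - 1 / 2 * (μ i - 1)) ^ 2) ≤ (1 / 2 : ℝ) * (∑ i ∈ s, (1 - μ i)) ^ 2 := by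
  refine Real.sqrt_le_iff.mpr ⟨by positivity, ?_⟩
  calc ∑ i ∈ s, (√(μ i) - 1 - 1 / 2 * (μ i - 1)) ^ 2 ≤ ∑ i ∈ s, (1 - μ i) ^ 4 / 4 :=
        Finset.sum_le_sum fun i _ => sq_sqrt_sub_one_sub_half_le (h0 i)
    _ ≤ (∑ i ∈ s, (1 - μ i)) ^ 4 / 4 := by
        rw [← Finset.sum_div]
        gcongr
        exact Finset.sum_pow_le_pow_sum (fun i _ => sub_nonneg.mpr (h1 i)) four_ne_zero
    _ = ((1 / 2 : ℝ) * (∑ i ∈ s, (1 - μ i)) ^ 2) ^ 2 := by ring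

/-- Let `Z` be a real skew-symmetric `n × n` matrix such that
`I - Zᵀ Z` is positive definite and let `C = √(I - Zᵀ Z) - I` (unique positive
(semi)definite square root).  Then `‖C - ½ Z²‖_F ≤ ½ ‖Z‖_F ^ 4`. -/
theorem stmt5 {n : ℕ} (Z C : Matrix (Fin n) (Fin n) ℝ)
    (hZ : Zᵀ = -Z) (hpd : (1 - Zᵀ * Z).PosDef)
    (hC : C = hpd.posSemidef.sqrt - 1) :
    frobeniusNorm (C - (1 / 2 : ℝ) • (Z * Z)) ≤ (1 / 2 : ℝ) * frobeniusNorm Z ^ 4 := by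
  set A := 1 - Zᵀ * Z with hAdef
  have hA : A.IsHermitian := hpd.isHermitian
  have hZZ : Z * Z = A - 1 := by rw [hAdef, hZ]; noncomm_ring
  have hE : C - (1 / 2 : ℝ) • (Z * Z) = cfc (fun x => √x - 1 - 1 / 2 * (x - 1)) A := by
    rw [cfc_sub (fun x => √x - 1) (fun x => 1 / 2 * (x - 1)), cfc_sub Real.sqrt (fun _ => 1),
      cfc_const_mul (1 / 2) (fun x => x - 1), cfc_sub (fun x => x) (fun _ => 1), cfc_id' ℝ A,
      cfc_const_one ℝ A, hC, hZZ, hpd.posSemidef.sqrt_eq_cfc]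
  have hZF : frobeniusNorm Z ^ 2 = ∑ i, (1 - hA.eigenvalues i) := by
    have hZtZ : Zᵀ * Z = cfc (fun x : ℝ => 1 - x) A := by
      rw [cfc_sub (fun _ => 1) (fun x => x), cfc_const_one ℝ A, cfc_id' ℝ A, hAdef, sub_sub_cancel]
    rw [frobeniusNorm_sq, hZtZ, hA.trace_cfc]
    rfl
  have hle : (1 - A).PosSemidef := by
    rw [hAdef, sub_sub_cancel]
    simpa using posSemidef_conjTranspose_mul_self Z
  rw [hE, frobeniusNorm_cfc hA, show frobeniusNorm Z ^ 4 = (frobeniusNorm Z ^ 2) ^ 2 by ring, hZF]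
  exact sqrt_sum_sq_sqrt_sub_one_sub_half_le _ hpd.posSemidef.eigenvalues_nonneg
    (hA.eigenvalues_le_one hle)
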